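/- Define for β > β_c and x = (x1,x2) ∈ R^2 \ {0} the surface tension τ_β(x) = x1·arcsinh(s x1) + x2·arcsinh(s x2), where s > 0 is the unique solution of sqrt(1+s^2 x1^2) + sqrt(1+s^2 x2^2) = sinh(2β) + 1/sinh(2β). Then lim_{β ↓ β_c} τ_β(x)/(β − β_c) = 4|x|, where |x| is the Euclidean norm. -/

import Mathlib

open Filter

/-- The critical inverse temperature of the 2d Ising model: `sinh (2 β_c) = 1`. -/
noncomputable def betaC : ℝ := Real.arsinh 1 / 2

/-!
Write `τ/(β - β_c) = (τ/s) · (s/(β - β_c))`. The parameter `s` tends to `0`, and since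
`arsinh y ~ y`, the first factor tends to `|x|²`. With `t = sinh (2β)` and
`√(1 + u) - 1 = u / (√(1 + u) + 1)`, the defining equation of `s` becomes
`(t - 1)² / t = s² W(s)` with `W(s) → |x|²/2`, while
`(t - 1)/(β - β_c) → 2 cosh (2β_c) = 2√2`.
Hence `(s/(β - β_c))² → 16/|x|²`, and the product tends to `|x|² · 4/|x| = 4|x|`.
-/

open Topology Real

lemma sinh_two_mul_betaC : sinh (2 * betaC) = 1 := by
  rw [betaC, mul_div_cancel₀ _ two_ne_zero, sinh_arsinh]

lemma tendsto_arsinh_div_self : Tendsto (fun y => arsinh y / y) (𝓝[≠] 0) (𝓝 1) := by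
  have h := hasDerivAt_iff_tendsto_slope.mp (hasDerivAt_arsinh 0)
  rw [zero_pow two_ne_zero, add_zero, sqrt_one, inv_one] at h
  refine h.congr fun y => ?_
  simp [slope_def_field]

lemma tendsto_mul_arsinh_mul_div {α : Type*} {l : Filter α} {s : α → ℝ}
    (hs : Tendsto s l (𝓝[>] 0)) (x : ℝ) :
    Tendsto (fun a => x * arsinh (s a * x) / s a) l (𝓝 (x ^ 2)) := by
  rcases eq_or_ne x 0 with rfl | hx
  · simpa using tendsto_const_nhds
  have hpos : ∀ᶠ a in l, 0 < s a := hs self_mem_nhdsWithin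
  have hsx : Tendsto (fun a => s a * x) l (𝓝[≠] 0) :=
    tendsto_nhdsWithin_iff.2 ⟨by simpa using (tendsto_nhds_of_tendsto_nhdsWithin hs).mul_const x,
      hpos.mono fun a ha => mul_ne_zero ha.ne' hx⟩
  have h := (tendsto_arsinh_div_self.comp hsx).const_mul (x ^ 2)
  rw [mul_one] at h
  refine h.congr' (hpos.mono fun a ha => ?_)
  simp only [Function.comp_apply]
  field_simp

lemma tendsto_add_inv_sub_two_div_sq {f : ℝ → ℝ} {f' a : ℝ} (hf : HasDerivAt f f' a)
    (ha : f a = 1) :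
    Tendsto (fun x => (f x + 1 / f x - 2) / (x - a) ^ 2) (𝓝[≠] a) (𝓝 (f' ^ 2)) := by
  have hslope : Tendsto (fun x => (f x - 1) / (x - a)) (𝓝[≠] a) (𝓝 f') := by
    refine (hasDerivAt_iff_tendsto_slope.mp hf).congr fun x => ?_
    rw [slope_def_field, ha]
  have hf1 : Tendsto f (𝓝[≠] a) (𝓝 1) :=
    ha ▸ hf.continuousAt.tendsto.mono_left nhdsWithin_le_nhds
  have h := (hslope.pow 2).div hf1 one_ne_zero
  rw [div_one] at h
  refine h.congr' ?_
  filter_upwards [self_mem_nhdsWithin, hf1.eventually_ne one_ne_zero] with x hx hfx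
  have : x - a ≠ 0 := sub_ne_zero.mpr hx
  simp only [Pi.div_apply]
  field_simp
  ring

lemma tendsto_sinh_add_inv_sub_two_div_sq :
    Tendsto (fun β => (sinh (2 * β) + 1 / sinh (2 * β) - 2) / (β - betaC) ^ 2)
      (𝓝[≠] betaC) (𝓝 8) := by
  have hf : HasDerivAt (fun β => sinh (2 * β)) (2 * cosh (2 * betaC)) betaC := by
    simpa [mul_comm] using ((hasDerivAt_id betaC).const_mul 2).sinh
  convert tendsto_add_inv_sub_two_div_sq hf sinh_two_mul_betaC using 2
  rw [mul_pow, cosh_sq, sinh_two_mul_betaC]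
  norm_num

lemma sqrt_one_add_sub_one {u : ℝ} (hu : 0 ≤ u) : √(1 + u) - 1 = u / (√(1 + u) + 1) := by
  have h := sq_sqrt (by linarith : (0 : ℝ) ≤ 1 + u)
  rw [eq_div_iff (by positivity)]
  nlinarith

lemma add_le_of_sqrt_one_add_add_sqrt_one_add {a b : ℝ} (ha : 0 ≤ a) (hb : 0 ≤ b) :
    a + b ≤ 2 * (√(1 + a) + √(1 + b) - 2) * (√(1 + a) + √(1 + b)) := by
  have hA : 1 ≤ √(1 + a) := one_le_sqrt.mpr (by linarith)
  have hB : 1 ≤ √(1 + b) := one_le_sqrt.mpr (by linarith)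
  have hA2 := sq_sqrt (by linarith : (0 : ℝ) ≤ 1 + a)
  have hB2 := sq_sqrt (by linarith : (0 : ℝ) ≤ 1 + b)
  nlinarith [mul_nonneg (sub_nonneg.2 hA) (sub_nonneg.2 hB)]

lemma tendsto_zero_of_sqrt_one_add_sq_mul_add {α : Type*} {l : Filter α} {s : α → ℝ}
    {x1 x2 : ℝ} (hx : 0 < x1 ^ 2 + x2 ^ 2)
    (h : Tendsto (fun a => √(1 + s a ^ 2 * x1 ^ 2) + √(1 + s a ^ 2 * x2 ^ 2)) l (𝓝 2)) :
    Tendsto s l (𝓝 0) := by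
  have hbound : Tendsto (fun a => 2 * (√(1 + s a ^ 2 * x1 ^ 2) + √(1 + s a ^ 2 * x2 ^ 2) - 2) *
      (√(1 + s a ^ 2 * x1 ^ 2) + √(1 + s a ^ 2 * x2 ^ 2)) / (x1 ^ 2 + x2 ^ 2)) l (𝓝 0) := by
    simpa using (((h.sub_const 2).const_mul 2).mul h).div_const (x1 ^ 2 + x2 ^ 2)
  have hsq : Tendsto (fun a => s a ^ 2) l (𝓝 0) := by
    refine squeeze_zero (fun a => sq_nonneg _) (fun a => ?_) hbound
    rw [le_div_iff₀ hx, mul_add]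
    exact add_le_of_sqrt_one_add_add_sqrt_one_add (by positivity) (by positivity)
  rw [tendsto_zero_iff_abs_tendsto_zero]
  simpa [Function.comp_def, sqrt_sq_eq_abs] using hsq.sqrt

lemma sqrt_one_add_sq_mul_add_sub_two (s x1 x2 : ℝ) :
    √(1 + s ^ 2 * x1 ^ 2) + √(1 + s ^ 2 * x2 ^ 2) - 2 =
      s ^ 2 * (x1 ^ 2 / (√(1 + s ^ 2 * x1 ^ 2) + 1) +
        x2 ^ 2 / (√(1 + s ^ 2 * x2 ^ 2) + 1)) := by
  have h1 := sqrt_one_add_sub_one (by positivity : 0 ≤ s ^ 2 * x1 ^ 2)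
  have h2 := sqrt_one_add_sub_one (by positivity : 0 ≤ s ^ 2 * x2 ^ 2)
  rw [mul_add, ← mul_div_assoc, ← mul_div_assoc, ← h1, ← h2]
  ring

lemma tendsto_div_sub_betaC_sq {x1 x2 : ℝ} (hx : 0 < x1 ^ 2 + x2 ^ 2) {s : ℝ → ℝ}
    (hs0 : Tendsto s (𝓝[>] betaC) (𝓝 0))
    (hsol : ∀ᶠ β in 𝓝[>] betaC, √(1 + s β ^ 2 * x1 ^ 2) + √(1 + s β ^ 2 * x2 ^ 2) =
      sinh (2 * β) + 1 / sinh (2 * β)) :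
    Tendsto (fun β => (s β / (β - betaC)) ^ 2) (𝓝[>] betaC)
      (𝓝 (16 / (x1 ^ 2 + x2 ^ 2))) := by
  set W : ℝ → ℝ := fun t =>
    x1 ^ 2 / (√(1 + t ^ 2 * x1 ^ 2) + 1) + x2 ^ 2 / (√(1 + t ^ 2 * x2 ^ 2) + 1) with hWdef
  have hW : Tendsto (fun β => W (s β)) (𝓝[>] betaC) (𝓝 ((x1 ^ 2 + x2 ^ 2) / 2)) := by
    have hc : Continuous W := by
      rw [hWdef]
      fun_prop (disch := intros; positivity)
    have h0 : W 0 = (x1 ^ 2 + x2 ^ 2) / 2 := by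
      rw [hWdef]
      norm_num [add_div]
    exact h0 ▸ (hc.tendsto 0).comp hs0
  have h := (tendsto_sinh_add_inv_sub_two_div_sq.mono_left (nhdsGT_le_nhdsNE betaC)).div hW
    (by positivity)
  convert h.congr' ?_ using 2
  · field_simp
    norm_num
  filter_upwards [hsol, hW.eventually_ne (by positivity)] with β hβ hWβ
  simp only [hWdef, Pi.div_apply] at hWβ ⊢
  rw [← hβ, sqrt_one_add_sq_mul_add_sub_two, mul_div_right_comm, mul_div_cancel_right₀ _ hWβ,
    div_pow]

/-- The McCoy–Wu surface tension near criticality: if for each `β > β_c`, `s β > 0`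
solves `√(1+s²x₁²)+√(1+s²x₂²) = sinh(2β) + 1/sinh(2β)`, then
`τ_β(x) = x₁ arsinh(s x₁) + x₂ arsinh(s x₂)` satisfies
`τ_β(x)/(β−β_c) → 4|x|` as `β ↓ β_c`. -/
theorem surface_tension_near_criticality (x1 x2 : ℝ) (hx : ¬(x1 = 0 ∧ x2 = 0))
    (s : ℝ → ℝ)
    (hs : ∀ β, betaC < β → 0 < s β ∧
      Real.sqrt (1 + (s β) ^ 2 * x1 ^ 2) + Real.sqrt (1 + (s β) ^ 2 * x2 ^ 2)
        = Real.sinh (2 * β) + 1 / Real.sinh (2 * β)) :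
    Tendsto
      (fun β => (x1 * Real.arsinh (s β * x1) + x2 * Real.arsinh (s β * x2)) / (β - betaC))
      (nhdsWithin betaC (Set.Ioi betaC))
      (nhds (4 * Real.sqrt (x1 ^ 2 + x2 ^ 2))) := by
  have hn : 0 < x1 ^ 2 + x2 ^ 2 := by
    rcases not_and_or.mp hx with h | h <;> positivity
  have hsol : ∀ᶠ β in 𝓝[>] betaC, _ := eventually_nhdsWithin_of_forall hs
  have hsinh : Tendsto (fun β => sinh (2 * β) + 1 / sinh (2 * β)) (𝓝[>] betaC) (𝓝 2) := by
    have hc : ContinuousAt (fun β => sinh (2 * β) + 1 / sinh (2 * β)) betaC := by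
      fun_prop (disch := simp [sinh_two_mul_betaC])
    convert hc.tendsto.mono_left nhdsWithin_le_nhds using 2
    norm_num [sinh_two_mul_betaC]
  have hs0 : Tendsto s (𝓝[>] betaC) (𝓝 0) :=
    tendsto_zero_of_sqrt_one_add_sq_mul_add hn (hsinh.congr' (hsol.mono fun β h => h.2.symm))
  have hratio : Tendsto (fun β => s β / (β - betaC)) (𝓝[>] betaC)
      (𝓝 (4 / √(x1 ^ 2 + x2 ^ 2))) := by
    have h := (tendsto_div_sub_betaC_sq hn hs0 (hsol.mono fun β h => h.2)).sqrt
    rw [sqrt_div' _ hn.le, show √16 = 4 by norm_num] at h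
    refine h.congr' ?_
    filter_upwards [self_mem_nhdsWithin, hsol] with β (hβ : betaC < β) h
    exact sqrt_sq (div_pos h.1 (sub_pos.2 hβ)).le
  have hs0' : Tendsto s (𝓝[>] betaC) (𝓝[>] 0) :=
    tendsto_nhdsWithin_iff.2 ⟨hs0, hsol.mono fun β h => h.1⟩
  have hτ := (tendsto_mul_arsinh_mul_div hs0' x1).add (tendsto_mul_arsinh_mul_div hs0' x2)
  convert (hτ.mul hratio).congr' ?_ using 2
  · field_simp
    rw [sq_sqrt hn.le]
  filter_upwards [hsol] with β h
  have hs_ne := h.1.ne'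
  field_simp
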